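/- arXiv:2408.05392 — 8 statements merged into one kernel-verified Lean document; each statement's English description precedes it below -/
import Mathlib

section
/- There is no finite list F of split sets in ℝ³ such that for every positive integer γ, the split set S_γ = {x ∈ ℝ³ : γ < x₁ + γx₂ + (γ+1)x₃ < γ + 1} satisfies S_γ ∩ [0,1]³ ⊆ S ∩ [0,1]³ for some S ∈ F. -/
/-!
If `S((a, b, c), η)` contains `S_γ ∩ [0,1]³`, the points `(1/2, 1, 0)`, `(1/4, 1, 0)` and
`(0, 1/2, 1/2)` of `S_γ` pin the normal vector down to `(1, η, η + 1)` or `(-1, η + 1, η)`.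
The point `(1, 0, t)` with `(γ + 1) t = γ - 1/2` also lies in `S_γ`, and for either normal
vector it forces `2γ ≤ 3|η|`. So a finite family, whose `|η|` are bounded, covers only
finitely many `S_γ`.
-/

/-- `S_γ ∩ [0,1]³ ⊆ S((a, b, c), η)`. -/
def SplitCovers (γ a b c η : ℤ) : Prop :=
  ∀ x₁ x₂ x₃ : ℝ, 0 ≤ x₁ → x₁ ≤ 1 → 0 ≤ x₂ → x₂ ≤ 1 → 0 ≤ x₃ → x₃ ≤ 1 →
    (γ : ℝ) < x₁ + γ * x₂ + (γ + 1) * x₃ → x₁ + γ * x₂ + (γ + 1) * x₃ < (γ : ℝ) + 1 →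
    ((η : ℝ) < a * x₁ + b * x₂ + c * x₃ ∧ a * x₁ + b * x₂ + c * x₃ < (η : ℝ) + 1)

namespace SplitCovers

variable {γ a b c η : ℤ}

theorem int_bounds_of_eval_eq_div (h : SplitCovers γ a b c η) {k m : ℤ} (hk : 0 < k)
    {x₁ x₂ x₃ : ℝ} (h₁ : 0 ≤ x₁) (h₁' : x₁ ≤ 1) (h₂ : 0 ≤ x₂) (h₂' : x₂ ≤ 1)
    (h₃ : 0 ≤ x₃) (h₃' : x₃ ≤ 1)
    (hlo : (γ : ℝ) < x₁ + γ * x₂ + (γ + 1) * x₃)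
    (hhi : x₁ + γ * x₂ + (γ + 1) * x₃ < (γ : ℝ) + 1)
    (hm : a * x₁ + b * x₂ + c * x₃ = (m : ℝ) / k) :
    k * η < m ∧ m < k * (η + 1) := by
  have hk' : (0 : ℝ) < k := by exact_mod_cast hk
  obtain ⟨hl, hr⟩ := h x₁ x₂ x₃ h₁ h₁' h₂ h₂' h₃ h₃' hlo hhi
  rw [hm, lt_div_iff₀ hk'] at hl
  rw [hm, div_lt_iff₀ hk'] at hr
  constructor
  · exact_mod_cast (by linarith : (k : ℝ) * η < m)
  · exact_mod_cast (by linarith : (m : ℝ) < k * (η + 1))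

theorem coeffs_eq (h : SplitCovers γ a b c η) (hγ : 1 ≤ γ) :
    (a = 1 ∧ b = η ∧ c = η + 1) ∨ (a = -1 ∧ b = η + 1 ∧ c = η) := by
  have hγ' : (1 : ℝ) ≤ γ := by exact_mod_cast hγ
  have h₁ := h.int_bounds_of_eval_eq_div (k := 2) (m := a + 2 * b) two_pos
    (x₁ := 1 / 2) (x₂ := 1) (x₃ := 0)
    (by norm_num) (by norm_num) (by norm_num) (by norm_num) (by norm_num) (by norm_num)
    (by linarith) (by linarith) (by push_cast; ring)
  have h₂ := h.int_bounds_of_eval_eq_div (k := 4) (m := a + 4 * b) four_pos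
    (x₁ := 1 / 4) (x₂ := 1) (x₃ := 0)
    (by norm_num) (by norm_num) (by norm_num) (by norm_num) (by norm_num) (by norm_num)
    (by linarith) (by linarith) (by push_cast; ring)
  have h₃ := h.int_bounds_of_eval_eq_div (k := 2) (m := b + c) two_pos
    (x₁ := 0) (x₂ := 1 / 2) (x₃ := 1 / 2)
    (by norm_num) (by norm_num) (by norm_num) (by norm_num) (by norm_num) (by norm_num)
    (by linarith) (by linarith) (by push_cast; ring)
  omega

theorem two_mul_le_three_mul_abs (h : SplitCovers γ a b c η) (hγ : 1 ≤ γ) :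
    2 * γ ≤ 3 * |η| := by
  have hγ' : (1 : ℝ) ≤ γ := by exact_mod_cast hγ
  have hd : (0 : ℝ) < 2 * γ + 2 := by linarith
  have ht : ((γ : ℝ) + 1) * ((2 * γ - 1) / (2 * γ + 2)) = γ - 1 / 2 := by
    field_simp
  have h₄ := h.int_bounds_of_eval_eq_div (k := 2 * γ + 2) 
    (m := (2 * γ + 2) * a + (2 * γ - 1) * c) (by omega)
    (x₁ := 1) (x₂ := 0) (x₃ := (2 * γ - 1) / (2 * γ + 2))
    (by norm_num) (by norm_num) (by norm_num) (by norm_num)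
    (div_nonneg (by linarith) hd.le) ((div_le_one hd).mpr (by linarith))
    (by rw [ht]; linarith) (by rw [ht]; linarith) (by push_cast; field_simp; ring)
  rcases h.coeffs_eq hγ with ⟨rfl, -, rfl⟩ | ⟨rfl, -, hc⟩
  · have : 2 * γ < 3 * η + 1 := by linarith [h₄.1, h₄.2]
    rw [abs_of_nonneg (by omega)]; omega
  · subst c
    have : 3 * η < -2 * γ - 2 := by linarith [h₄.1, h₄.2]
    rw [abs_of_neg (by omega)]; omega

end SplitCovers

theorem stmt_4 :
    ¬ ∃ F : Finset ((ℤ × ℤ × ℤ) × ℤ),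
      ∀ γ : ℤ, 1 ≤ γ →
        ∃ p ∈ F,
          ∀ x₁ x₂ x₃ : ℝ, 0 ≤ x₁ → x₁ ≤ 1 → 0 ≤ x₂ → x₂ ≤ 1 → 0 ≤ x₃ → x₃ ≤ 1 →
            (γ : ℝ) < x₁ + γ * x₂ + (γ + 1) * x₃ →
            x₁ + γ * x₂ + (γ + 1) * x₃ < (γ : ℝ) + 1 →
            ((p.2 : ℝ) < p.1.1 * x₁ + p.1.2.1 * x₂ + p.1.2.2 * x₃ ∧
              p.1.1 * x₁ + p.1.2.1 * x₂ + p.1.2.2 * x₃ < (p.2 : ℝ) + 1) := by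
  rintro ⟨F, hF⟩
  set N : ℕ := F.sup fun p => p.2.natAbs
  obtain ⟨⟨⟨a, b, c⟩, η⟩, hpF, hp⟩ := hF (2 * N + 2) (by omega)
  have hηN : η.natAbs ≤ N := Finset.le_sup (f := fun p : (ℤ × ℤ × ℤ) × ℤ => p.2.natAbs) hpF
  have hγη := SplitCovers.two_mul_le_three_mul_abs hp (by omega)
  rw [Int.abs_eq_natAbs] at hγη
  omega
end

section
/- Fix an integer γ ≥ 1 and let S_γ = {x ∈ ℝ³ : γ < x₁ + γx₂ + (γ+1)x₃ < γ + 1}. Suppose π ∈ ℤ³, η ∈ ℤ are such that S_γ ∩ [0,1]³ ⊆ {x : η < πᵀx < η + 1} ∩ [0,1]³, and suppose further that {x ∈ [0,1]³ : πᵀx ≤ η} ⊆ {x ∈ [0,1]³ : x₁ + γx₂ + (γ+1)x₃ ≤ γ} and {x ∈ [0,1]³ : πᵀx ≥ η + 1} ⊆ {x ∈ [0,1]³ : x₁ + γx₂ + (γ+1)x₃ ≥ γ + 1}. Then π₁ = 1, π₂ = η, and π₃ = η + 1. -/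
/-!
Since the split is open and the slab `γ < x₁ + γx₂ + (γ+1)x₃ < γ+1` meets the cube (at `(1/2,1,0)`),
the split's closure contains the closed slab within the cube: approach a point of the closed slab
along a segment from an interior point. The vertices `e₂`, `e₃`, `e₁ + e₂` lie on the boundary of
the slab, and the hypotheses on the two sides of the split, together with integrality, force
`πᵀx = η` at `e₂` and `πᵀx = η + 1` at `e₃` and at `e₁ + e₂`.
-/

open Set Filter Topology AffineMap

theorem mem_Icc_of_forall_lineMap_mem_Ioo {a b l u : ℝ}
    (h : ∀ t ∈ Ioo (0 : ℝ) 1, lineMap a b t ∈ Ioo l u) : a ∈ Icc l u := by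
  have hlim : Tendsto (fun t : ℝ => lineMap a b t) (𝓝[>] 0) (𝓝 a) := by
    have hcont : Continuous fun t : ℝ => t * (b - a) + a := by fun_prop
    simpa [lineMap_apply_ring'] using (hcont.tendsto 0).mono_left nhdsWithin_le_nhds
  exact isClosed_Icc.mem_of_tendsto hlim
    (eventually_of_mem (Ioo_mem_nhdsGT one_pos) fun t ht => Ioo_subset_Icc_self (h t ht))

theorem lineMap_mem_Ioo_of_mem_Icc {k : Type*} [Field k] [LinearOrder k] [IsStrictOrderedRing k]
    {a b l u t : k} (ha : a ∈ Icc l u) (hb : b ∈ Ioo l u) (ht : t ∈ Ioo (0 : k) 1) :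
    lineMap a b t ∈ Ioo l u := by
  obtain ⟨hal, hau⟩ := ha
  obtain ⟨hbl, hbu⟩ := hb
  obtain ⟨ht0, ht1⟩ := ht
  rw [lineMap_apply_ring]
  constructor <;> nlinarith

theorem Convex.inter_preimage_Icc_subset_of_inter_preimage_Ioo_subset {E : Type*}
    [AddCommGroup E] [Module ℝ E] {K : Set E} (hK : Convex ℝ K) {f p : E →ᵃ[ℝ] ℝ} {a b l u : ℝ}
    (hne : (K ∩ f ⁻¹' Ioo a b).Nonempty) (h : K ∩ f ⁻¹' Ioo a b ⊆ p ⁻¹' Ioo l u) :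
    K ∩ f ⁻¹' Icc a b ⊆ p ⁻¹' Icc l u := by
  obtain ⟨c, hcK, hfc⟩ := hne
  rintro x ⟨hxK, hfx⟩
  refine mem_Icc_of_forall_lineMap_mem_Ioo (b := p c) fun t ht => ?_
  rw [← p.apply_lineMap]
  refine h ⟨hK.lineMap_mem hxK hcK (Ioo_subset_Icc_self ht), ?_⟩
  rw [mem_preimage, f.apply_lineMap]
  exact lineMap_mem_Ioo_of_mem_Icc hfx hfc ht

def linearForm₃ (a b c : ℝ) : (Fin 3 → ℝ) →ᵃ[ℝ] ℝ :=
  LinearMap.toAffineMap (a • LinearMap.proj 0 + b • LinearMap.proj 1 + c • LinearMap.proj 2)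

@[simp]
theorem linearForm₃_apply (a b c : ℝ) (x : Fin 3 → ℝ) :
    linearForm₃ a b c x = a * x 0 + b * x 1 + c * x 2 := by
  simp [linearForm₃]

theorem stmt_5_general (γ π₁ π₂ π₃ η : ℤ)
    (hdom : ∀ x₁ x₂ x₃ : ℝ, 0 ≤ x₁ → x₁ ≤ 1 → 0 ≤ x₂ → x₂ ≤ 1 → 0 ≤ x₃ → x₃ ≤ 1 →
      (γ : ℝ) < x₁ + γ * x₂ + (γ + 1) * x₃ →
      x₁ + γ * x₂ + (γ + 1) * x₃ < (γ : ℝ) + 1 →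
      ((η : ℝ) < π₁ * x₁ + π₂ * x₂ + π₃ * x₃ ∧
        π₁ * x₁ + π₂ * x₂ + π₃ * x₃ < (η : ℝ) + 1))
    (hL : ∀ x₁ x₂ x₃ : ℝ, 0 ≤ x₁ → x₁ ≤ 1 → 0 ≤ x₂ → x₂ ≤ 1 → 0 ≤ x₃ → x₃ ≤ 1 →
      π₁ * x₁ + π₂ * x₂ + π₃ * x₃ ≤ (η : ℝ) →
      x₁ + γ * x₂ + (γ + 1) * x₃ ≤ (γ : ℝ))
    (hR : ∀ x₁ x₂ x₃ : ℝ, 0 ≤ x₁ → x₁ ≤ 1 → 0 ≤ x₂ → x₂ ≤ 1 → 0 ≤ x₃ → x₃ ≤ 1 →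
      (η : ℝ) + 1 ≤ π₁ * x₁ + π₂ * x₂ + π₃ * x₃ →
      (γ : ℝ) + 1 ≤ x₁ + γ * x₂ + (γ + 1) * x₃) :
    π₁ = 1 ∧ π₂ = η ∧ π₃ = η + 1 := by
  have hslab : Icc (0 : Fin 3 → ℝ) 1 ∩ linearForm₃ 1 γ (γ + 1) ⁻¹' Icc (γ : ℝ) (γ + 1) ⊆
      linearForm₃ π₁ π₂ π₃ ⁻¹' Icc (η : ℝ) (η + 1) := by
    refine (convex_Icc 0 1).inter_preimage_Icc_subset_of_inter_preimage_Ioo_subset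
      ⟨![1 / 2, 1, 0], ?_, ?_⟩ ?_
    · norm_num [Pi.le_def, Fin.forall_fin_succ]
    · simp only [mem_preimage, mem_Ioo, linearForm₃_apply, Matrix.cons_val_zero,
        Matrix.cons_val_one, Matrix.cons_val]
      constructor <;> linarith
    · rintro y ⟨⟨hy0, hy1⟩, hfy⟩
      simp only [mem_preimage, linearForm₃_apply, one_mul, mem_Ioo] at hfy ⊢
      exact hdom _ _ _ (hy0 0) (hy1 0) (hy0 1) (hy1 1) (hy0 2) (hy1 2) hfy.1 hfy.2
  have h010 := @hslab ![0, 1, 0] ⟨by simp [Pi.le_def, Fin.forall_fin_succ], by simp⟩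
  have h001 := @hslab ![0, 0, 1] ⟨by simp [Pi.le_def, Fin.forall_fin_succ], by simp⟩
  have h110 := @hslab ![1, 1, 0] ⟨by simp [Pi.le_def, Fin.forall_fin_succ], by simp [add_comm]⟩
  have hR010 := hR 0 1 0
  have hL001 := hL 0 0 1
  have hL110 := hL 1 1 0
  simp only [mem_preimage, mem_Icc, linearForm₃_apply, Matrix.cons_val_zero, Matrix.cons_val_one,
    Matrix.cons_val, mul_zero, mul_one, zero_add, add_zero, zero_le_one, le_refl, forall_const]
    at h010 h001 h110 hR010 hL001 hL110
  norm_cast at h010 h001 h110 hR010 hL001 hL110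
  omega

theorem stmt_5 (γ π₁ π₂ π₃ η : ℤ) (hγ : 1 ≤ γ)
    (hdom : ∀ x₁ x₂ x₃ : ℝ, 0 ≤ x₁ → x₁ ≤ 1 → 0 ≤ x₂ → x₂ ≤ 1 → 0 ≤ x₃ → x₃ ≤ 1 →
      (γ : ℝ) < x₁ + γ * x₂ + (γ + 1) * x₃ →
      x₁ + γ * x₂ + (γ + 1) * x₃ < (γ : ℝ) + 1 →
      ((η : ℝ) < π₁ * x₁ + π₂ * x₂ + π₃ * x₃ ∧
        π₁ * x₁ + π₂ * x₂ + π₃ * x₃ < (η : ℝ) + 1))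
    (hL : ∀ x₁ x₂ x₃ : ℝ, 0 ≤ x₁ → x₁ ≤ 1 → 0 ≤ x₂ → x₂ ≤ 1 → 0 ≤ x₃ → x₃ ≤ 1 →
      π₁ * x₁ + π₂ * x₂ + π₃ * x₃ ≤ (η : ℝ) →
      x₁ + γ * x₂ + (γ + 1) * x₃ ≤ (γ : ℝ))
    (hR : ∀ x₁ x₂ x₃ : ℝ, 0 ≤ x₁ → x₁ ≤ 1 → 0 ≤ x₂ → x₂ ≤ 1 → 0 ≤ x₃ → x₃ ≤ 1 →
      (η : ℝ) + 1 ≤ π₁ * x₁ + π₂ * x₂ + π₃ * x₃ →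
      (γ : ℝ) + 1 ≤ x₁ + γ * x₂ + (γ + 1) * x₃) :
    π₁ = 1 ∧ π₂ = η ∧ π₃ = η + 1 :=
  stmt_5_general γ π₁ π₂ π₃ η hdom hL hR
end

section
/- For k ≥ 3, there does not exist a finite list F of k-sparse split sets in ℝⁿ (n ≥ k) such that every k-sparse split set S(π, η) is dominated by some single member of F, i.e., S(π, η) ∩ [0,1]ⁿ ⊆ S' ∩ [0,1]ⁿ for some S' ∈ F. -/
/-!
The splits `0 < x₀ + (m+1) x₁ - (m+2) x₂ < 1`, `m ∈ ℕ`, are 3-sparse, so a finite family would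
have to dominate two of them, `m ≠ m'`, by one split `E < ψ(x) < E + 1`; test points supported on
the first three coordinates only see its coefficients `A, B, C` there. The open segment from `0`
to `e₀` lies in the split and its endpoints are lattice points, so `ψ` maps it onto `(E, E + 1)`.
Along the parallel segment through `(0, 1, (m+1)/(m+2))` the split takes the same values, which
forces `B (m+2) + C (m+1) = 0`; holding for `m` and `m'`, this gives `B = 0`. But then `ψ = 0`
at `(0, 1/(2(m+1)), 0)`, a point of the split, and no integer `E` has `E < 0 < E + 1`.
-/

open Set

theorem Set.MapsTo.Icc_of_Ioo {α β : Type*} [TopologicalSpace α] [LinearOrder α] [OrderTopology α]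
    [DenselyOrdered α] [TopologicalSpace β] [LinearOrder β] [OrderTopology β] [DenselyOrdered β]
    {f : α → β} (hf : Continuous f) {a b : α} {c d : β} (hab : a ≠ b) (hcd : c ≠ d)
    (h : MapsTo f (Ioo a b) (Ioo c d)) : MapsTo f (Icc a b) (Icc c d) := by
  simpa only [closure_Ioo hab, closure_Ioo hcd] using h.closure hf

section Single₃

variable {n : ℕ} {M : Type*} [AddCommMonoid M] (i j l : Fin n)

def single₃ (a b c : M) : Fin n → M := Pi.single i a + Pi.single j b + Pi.single l c

variable {i j l}

theorem card_support_single₃_le [DecidableEq M] (a b c : M) :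
    (Finset.univ.filter fun t => single₃ i j l a b c t ≠ 0).card ≤ 3 := by
  refine (Finset.card_le_card fun t ht => ?_).trans
    (Finset.card_le_three (a := i) (b := j) (c := l))
  by_contra hne
  simp only [Finset.mem_insert, Finset.mem_singleton, not_or] at hne
  simp [single₃, Pi.single_apply, hne.1, hne.2.1, hne.2.2] at ht

theorem single₃_mem {s : Set M} {a b c : M} (ha : a ∈ s) (hb : b ∈ s) (hc : c ∈ s) (h0 : 0 ∈ s)
    (hij : i ≠ j) (hil : i ≠ l) (hjl : j ≠ l) (t : Fin n) : single₃ i j l a b c t ∈ s := by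
  simp only [single₃, Pi.add_apply, Pi.single_apply]
  split_ifs <;> subst_vars <;> simp_all

theorem single₃_apply_left (hij : i ≠ j) (hil : i ≠ l) (a b c : M) :
    single₃ i j l a b c i = a := by
  simp [single₃, hij, hil]

theorem single₃_apply_middle (hij : i ≠ j) (hjl : j ≠ l) (a b c : M) :
    single₃ i j l a b c j = b := by
  simp [single₃, hij.symm, hjl]

theorem single₃_apply_right (hil : i ≠ l) (hjl : j ≠ l) (a b c : M) :
    single₃ i j l a b c l = c := by
  simp [single₃, hil.symm, hjl.symm]

theorem sum_mul_single₃ {R : Type*} [CommSemiring R] (f : Fin n → R) (u v w : R) :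
    ∑ t, f t * single₃ i j l u v w t = f i * u + f j * v + f l * w := by
  simp [single₃, mul_add, Finset.sum_add_distrib, Pi.single_apply]

end Single₃

def DominatesHardSplit (A B C E : ℤ) (m : ℕ) : Prop :=
  ∀ u ∈ Icc (0 : ℝ) 1, ∀ v ∈ Icc (0 : ℝ) 1, ∀ w ∈ Icc (0 : ℝ) 1,
    u + (m + 1) * v - (m + 2) * w ∈ Ioo (0 : ℝ) 1 → A * u + B * v + C * w ∈ Ioo (E : ℝ) (E + 1)

namespace DominatesHardSplit

variable {A B C E : ℤ} {m : ℕ}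

-- On the segment `u ↦ (u, v, w)` the hard split takes the value `u`.
theorem mapsTo_Icc_of_mul_eq_mul (h : DominatesHardSplit A B C E m) {v w : ℝ}
    (hv : v ∈ Icc (0 : ℝ) 1) (hw : w ∈ Icc (0 : ℝ) 1) (hvw : (m + 1) * v = (m + 2) * w) :
    MapsTo (fun u : ℝ => A * u + (B * v + C * w)) (Icc 0 1) (Icc (E : ℝ) (E + 1)) := by
  refine MapsTo.Icc_of_Ioo (by fun_prop) zero_ne_one (by simp) fun u hu => ?_
  have := h u (Ioo_subset_Icc_self hu) v hv w hw (by convert hu using 1; linarith)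
  simpa only [add_assoc] using this

theorem fst_coeff_cases (h : DominatesHardSplit A B C E m) :
    (E = 0 ∧ A = 1) ∨ (E = -1 ∧ A = -1) := by
  have hseg := h.mapsTo_Icc_of_mul_eq_mul (v := 0) (w := 0) (by simp) (by simp) (by ring)
  obtain ⟨h0l, h0r⟩ := hseg (left_mem_Icc.2 zero_le_one)
  obtain ⟨h1l, h1r⟩ := hseg (right_mem_Icc.2 zero_le_one)
  simp only [mul_zero, mul_one, add_zero] at h0l h0r h1l h1r
  have hA : A ≠ 0 := by
    rintro rfl
    obtain ⟨hl, hr⟩ := h (1 / 2) (by norm_num) 0 (by simp) 0 (by simp) (by norm_num)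
    simp only [Int.cast_zero, zero_mul, mul_zero, add_zero] at hl hr
    have : E < 0 := by exact_mod_cast hl
    have : -1 < E := by exact_mod_cast (by linarith : (-1 : ℝ) < E)
    omega
  have : E ≤ 0 := by exact_mod_cast h0l
  have : -1 ≤ E := by exact_mod_cast (by linarith : (-1 : ℝ) ≤ E)
  have : E ≤ A := by exact_mod_cast h1l
  have : A ≤ E + 1 := by exact_mod_cast h1r
  omega

theorem mul_add_mul_eq_zero (h : DominatesHardSplit A B C E m) :
    B * (m + 2) + C * (m + 1) = 0 := by
  have hm : (0 : ℝ) < m + 2 := by positivity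
  set w : ℝ := (m + 1) / (m + 2) with hw
  have hw01 : w ∈ Icc (0 : ℝ) 1 := ⟨by positivity, (div_le_one hm).2 (by linarith)⟩
  have hseg := h.mapsTo_Icc_of_mul_eq_mul (v := 1) (w := w) (by simp) hw01
    (by rw [hw]; field_simp)
  obtain ⟨h0l, h0r⟩ := hseg (left_mem_Icc.2 zero_le_one)
  obtain ⟨h1l, h1r⟩ := hseg (right_mem_Icc.2 zero_le_one)
  simp only [mul_zero, mul_one, zero_add] at h0l h0r h1l h1r
  have hθ : (B : ℝ) + C * w = 0 := by
    rcases h.fst_coeff_cases with ⟨rfl, rfl⟩ | ⟨rfl, rfl⟩ <;> push_cast at * <;> linarith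
  have : (B : ℝ) * (m + 2) + C * (m + 1) = 0 := by
    rw [← zero_mul ((m : ℝ) + 2), ← hθ, hw]
    field_simp
  exact_mod_cast this

theorem snd_coeff_ne_zero (h : DominatesHardSplit A B C E m) : B ≠ 0 := by
  rintro rfl
  have hm : (0 : ℝ) < m + 1 := by positivity
  obtain ⟨hl, hr⟩ := h 0 (by simp) (1 / (2 * (m + 1)))
    ⟨by positivity, (div_le_one (by positivity)).2 (by linarith)⟩ 0 (by simp)
    (by field_simp; norm_num)
  simp only [Int.cast_zero, zero_mul, mul_zero, add_zero] at hl hr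
  have : E < 0 := by exact_mod_cast hl
  have : -1 < E := by exact_mod_cast (by linarith : (-1 : ℝ) < E)
  omega

theorem false_of_ne {m' : ℕ} (hm : m ≠ m') (h : DominatesHardSplit A B C E m)
    (h' : DominatesHardSplit A B C E m') : False := by
  have hBC : (B + C) * ((m : ℤ) - m') = 0 := by
    linear_combination h.mul_add_mul_eq_zero - h'.mul_add_mul_eq_zero
  have hBC : B + C = 0 := by
    simpa [sub_eq_zero, hm] using hBC
  exact h.snd_coeff_ne_zero (by linear_combination h.mul_add_mul_eq_zero - (m + 1 : ℤ) * hBC)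

end DominatesHardSplit

def SplitDominates {n : ℕ} (π' : Fin n → ℤ) (η' : ℤ) (π : Fin n → ℤ) (η : ℤ) : Prop :=
  ∀ x : Fin n → ℝ, (∀ i, 0 ≤ x i ∧ x i ≤ 1) →
    (η : ℝ) < ∑ i, (π i : ℝ) * x i → (∑ i, (π i : ℝ) * x i) < (η : ℝ) + 1 →
    ((η' : ℝ) < ∑ i, (π' i : ℝ) * x i ∧ (∑ i, (π' i : ℝ) * x i) < (η' : ℝ) + 1)

theorem dominatesHardSplit_of_splitDominates {n : ℕ} {i j l : Fin n} (hij : i ≠ j) (hil : i ≠ l)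
    (hjl : j ≠ l) {π' : Fin n → ℤ} {η' : ℤ} {m : ℕ}
    (h : SplitDominates π' η' (single₃ i j l 1 (m + 1) (-(m + 2))) 0) :
    DominatesHardSplit (π' i) (π' j) (π' l) η' m := by
  intro u hu v hv w hw huvw
  have hx := h (single₃ i j l u v w)
    (single₃_mem (s := Icc 0 1) hu hv hw (by simp) hij hil hjl)
  rw [sum_mul_single₃, sum_mul_single₃, single₃_apply_left hij hil,
    single₃_apply_middle hij hjl, single₃_apply_right hil hjl] at hx
  push_cast at hx
  exact hx (by linarith [huvw.1]) (by linarith [huvw.2])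

theorem stmt_7 (k n : ℕ) (hk : 3 ≤ k) (hn : k ≤ n) :
    ¬ ∃ F : Finset ((Fin n → ℤ) × ℤ),
      (∀ p ∈ F, (Finset.univ.filter fun i => p.1 i ≠ 0).card ≤ k) ∧
      ∀ (π : Fin n → ℤ) (η : ℤ),
        (Finset.univ.filter fun i => π i ≠ 0).card ≤ k →
        ∃ p ∈ F,
          ∀ x : Fin n → ℝ, (∀ i, 0 ≤ x i ∧ x i ≤ 1) →
            (η : ℝ) < ∑ i, (π i : ℝ) * x i → (∑ i, (π i : ℝ) * x i) < (η : ℝ) + 1 →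
            ((p.2 : ℝ) < ∑ i, (p.1 i : ℝ) * x i ∧
              (∑ i, (p.1 i : ℝ) * x i) < (p.2 : ℝ) + 1) := by
  rintro ⟨F, -, hF⟩
  let i : Fin n := ⟨0, by omega⟩
  let j : Fin n := ⟨1, by omega⟩
  let l : Fin n := ⟨2, by omega⟩
  have hij : i ≠ j := by simp [i, j, Fin.ext_iff]
  have hil : i ≠ l := by simp [i, l, Fin.ext_iff]
  have hjl : j ≠ l := by simp [j, l, Fin.ext_iff]
  have hdom (m : ℕ) : ∃ p ∈ F, SplitDominates p.1 p.2 (single₃ i j l 1 (m + 1) (-(m + 2))) 0 :=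
    hF _ 0 ((card_support_single₃_le _ _ _).trans hk)
  choose p hpF hp using hdom
  obtain ⟨m, m', hm, hpm⟩ := Finite.exists_ne_map_eq_of_infinite fun m => (⟨p m, hpF m⟩ : F)
  have h' := dominatesHardSplit_of_splitDominates hij hil hjl (hp m')
  rw [← show p m = p m' from congrArg Subtype.val hpm] at h'
  exact (dominatesHardSplit_of_splitDominates hij hil hjl (hp m)).false_of_ne hm h'
end

section
/- Let F be any finite list of 2k-sparse split sets in ℝ^{2k} (k ≥ 2). Then there exists a positive integer θ such that no union of fewer than k split sets from F dominates the split set S^θ = {(x,y) ∈ ℝᵏ × ℝᵏ : Σᵢ θⁱ < Σᵢ θⁱ(xᵢ + yᵢ) < 1 + Σᵢ θⁱ} (sums over i = 1,…,k), i.e., (⋃ of any fewer than k members of F) ∩ [0,1]^{2k} does not contain S^θ ∩ [0,1]^{2k}. -/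
/-!
Fix `G ⊆ F` with fewer than `k` members. The `y`-parts of their normal vectors are fewer than `k`
vectors in `ℝᵏ`, so some `v ≠ 0` is orthogonal to all of them. For all large `θ`, the polynomial
`∑ vᵢ Xⁱ⁺¹` does not vanish at `θ`, and since `F` has finitely many subsets, one `θ` works for
every `G`. Scaling `v` gives `d` with `|dᵢ| ≤ 1` and `0 < ∑ θⁱ⁺¹ dᵢ < 1`. Put `xᵢ = 1, yᵢ = dᵢ`
where `dᵢ ≥ 0` and `xᵢ = 0, yᵢ = 1 + dᵢ` elsewhere: then `x + y = 1 + d`, so `(x, y)` lies in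
`S^θ ∩ [0,1]^{2k}`, while for each `(π, η) ∈ G` the value `πᵀ(x, y)` differs from the integer
`πᵀ(x, y - d)` by `π_yᵀd = 0`, hence `(x, y)` lies in none of the splits of `G`.
-/

open Filter Topology Polynomial Matrix

theorem Matrix.exists_mulVec_eq_zero_of_card_lt {κ ι K : Type*} [Fintype κ] [Fintype ι]
    [Field K] (A : Matrix κ ι K) (h : Fintype.card κ < Fintype.card ι) :
    ∃ v ≠ 0, A *ᵥ v = 0 := by
  have hker : LinearMap.ker A.mulVecLin ≠ ⊥ :=
    LinearMap.ker_ne_bot_of_finrank_lt (by simpa using h)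
  obtain ⟨v, hv, hv0⟩ := (Submodule.ne_bot_iff _).1 hker
  exact ⟨v, hv0, hv⟩

theorem eventually_sum_pow_mul_ne_zero {ι : Type*} [Fintype ι] {e : ι → ℕ}
    (he : Function.Injective e) {v : ι → ℝ} (hv : v ≠ 0) :
    ∀ᶠ x in atTop, ∑ i, x ^ e i * v i ≠ 0 := by
  classical
  set P : ℝ[X] := ∑ i, C (v i) * X ^ e i
  have hcoeff : ∀ j, P.coeff (e j) = v j := fun j => by
    simp only [P, finsetSum_coeff, coeff_C_mul_X_pow, he.eq_iff, Finset.sum_ite_eq,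
      Finset.mem_univ, if_true]
  obtain ⟨j, hj⟩ := Function.ne_iff.1 hv
  have hP : P ≠ 0 := fun h => hj (by simpa [h] using (hcoeff j).symm)
  filter_upwards [eventually_atTop_not_isRoot P hP] with x hx
  simpa only [IsRoot, P, eval_finsetSum, eval_mul, eval_C, eval_pow, eval_X, mul_comm] using hx

theorem exists_abs_mul_le_one_and_sum_mul_mem_Ioo {ι : Type*} [Fintype ι] {c v : ι → ℝ}
    (hcv : ∑ i, c i * v i ≠ 0) :
    ∃ t : ℝ, (∀ i, |t * v i| ≤ 1) ∧ ∑ i, c i * (t * v i) ∈ Set.Ioo 0 1 := by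
  set s := ∑ i, c i * v i
  have hsum : ∀ ε, ∑ i, c i * (ε / s * v i) = ε := fun ε => by
    simp only [mul_left_comm (c _), ← Finset.mul_sum]
    exact div_mul_cancel₀ ε hcv
  have hsmall : ∀ i, ∀ᶠ ε in 𝓝[>] (0 : ℝ), |ε / s * v i| ≤ 1 := fun i => by
    have hlim : Tendsto (fun ε : ℝ => ε / s * v i) (𝓝 0) (𝓝 0) := by
      simpa using ((continuous_id.div_const s).mul_const (v i)).tendsto 0
    exact (hlim.mono_left nhdsWithin_le_nhds).eventually
      (Icc_mem_nhds neg_one_lt_zero zero_lt_one) |>.mono fun _ => abs_le.2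
  obtain ⟨ε, hε, hεIoo⟩ :=
    ((eventually_all.2 hsmall).and (Ioo_mem_nhdsGT (zero_lt_one' ℝ))).exists
  exact ⟨ε / s, hε, by rwa [hsum]⟩

section Splits

variable {κ : Type*} [Fintype κ]

def splitSet (π : κ → ℤ) (η : ℤ) : Set (κ → ℝ) :=
  {z | (η : ℝ) < ∑ j, π j * z j ∧ ∑ j, π j * z j < η + 1}

theorem notMem_splitSet_of_sum_eq_intCast {π : κ → ℤ} {η N : ℤ} {z : κ → ℝ}
    (hz : ∑ j, π j * z j = N) : z ∉ splitSet π η := by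
  rintro ⟨hlo, hhi⟩
  rw [hz] at hlo hhi
  have : η < N := by exact_mod_cast hlo
  have : N < η + 1 := by exact_mod_cast hhi
  omega

end Splits

section LiftPoint

variable {ι : Type*}

noncomputable def nonnegIndicator (d : ι → ℝ) (i : ι) : ℤ := if 0 ≤ d i then 1 else 0

noncomputable def liftPoint (d : ι → ℝ) : ι ⊕ ι → ℝ :=
  Sum.elim (fun i => nonnegIndicator d i) (fun i => 1 - nonnegIndicator d i + d i)

theorem liftPoint_nonneg_and_le_one {d : ι → ℝ} (hd : ∀ i, |d i| ≤ 1) (j : ι ⊕ ι) :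
    0 ≤ liftPoint d j ∧ liftPoint d j ≤ 1 := by
  rcases j with i | i <;>
  · obtain ⟨hlo, hhi⟩ := abs_le.1 (hd i)
    by_cases h : 0 ≤ d i <;>
      simp only [liftPoint, nonnegIndicator, h, Sum.elim_inl, Sum.elim_inr, if_true, if_false] <;>
      push_cast <;> constructor <;> linarith

theorem liftPoint_inl_add_inr (d : ι → ℝ) (i : ι) :
    liftPoint d (.inl i) + liftPoint d (.inr i) = 1 + d i := by
  simp only [liftPoint, Sum.elim_inl, Sum.elim_inr]
  ring

variable [Fintype ι]

theorem sum_mul_liftPoint (π : ι ⊕ ι → ℤ) (d : ι → ℝ) :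
    ∑ j, π j * liftPoint d j =
      ((∑ i, (π (.inl i) * nonnegIndicator d i + π (.inr i) * (1 - nonnegIndicator d i)) : ℤ)
        : ℝ) + ∑ i, π (.inr i) * d i := by
  simp only [Fintype.sum_sum_type, liftPoint, Sum.elim_inl, Sum.elim_inr]
  push_cast
  simp only [mul_add, Finset.sum_add_distrib]
  ring

theorem exists_notMem_splitSet_of_sum_mul_ne_zero (c : ι → ℝ) (G : Finset ((ι ⊕ ι → ℤ) × ℤ))
    {v : ι → ℝ} (hv : ∀ p ∈ G, ∑ i, (p.1 (.inr i) : ℝ) * v i = 0)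
    (hcv : ∑ i, c i * v i ≠ 0) :
    ∃ z : ι ⊕ ι → ℝ, (∀ j, 0 ≤ z j ∧ z j ≤ 1) ∧
      ∑ i, c i < ∑ i, c i * (z (.inl i) + z (.inr i)) ∧
      ∑ i, c i * (z (.inl i) + z (.inr i)) < 1 + ∑ i, c i ∧
      ∀ p ∈ G, z ∉ splitSet p.1 p.2 := by
  obtain ⟨t, hd, hlo, hhi⟩ := exists_abs_mul_le_one_and_sum_mul_mem_Ioo hcv
  have hsum : ∑ i, c i * (liftPoint (fun i => t * v i) (.inl i) +
      liftPoint (fun i => t * v i) (.inr i)) = ∑ i, c i + ∑ i, c i * (t * v i) := by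
    simp only [liftPoint_inl_add_inr, mul_add, mul_one, Finset.sum_add_distrib]
  have hpd : ∀ p ∈ G, ∑ i, (p.1 (.inr i) : ℝ) * (t * v i) = 0 := fun p hp => by
    simp only [mul_left_comm _ t, ← Finset.mul_sum, hv p hp, mul_zero]
  exact ⟨liftPoint fun i => t * v i, liftPoint_nonneg_and_le_one hd, by linarith, by linarith,
    fun p hp => notMem_splitSet_of_sum_eq_intCast (by rw [sum_mul_liftPoint, hpd p hp, add_zero])⟩

end LiftPoint

theorem stmt_8_general (k : ℕ)
    (F : Finset ((Fin k ⊕ Fin k → ℤ) × ℤ)) :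
    ∃ θ : ℕ, 1 ≤ θ ∧
      ∀ G ⊆ F, G.card < k →
        ¬ (∀ z : Fin k ⊕ Fin k → ℝ, (∀ i, 0 ≤ z i ∧ z i ≤ 1) →
            ((∑ i : Fin k, (θ : ℝ) ^ (i.1 + 1)) <
              ∑ i : Fin k, (θ : ℝ) ^ (i.1 + 1) * (z (Sum.inl i) + z (Sum.inr i))) →
            ((∑ i : Fin k, (θ : ℝ) ^ (i.1 + 1) * (z (Sum.inl i) + z (Sum.inr i))) <
              1 + ∑ i : Fin k, (θ : ℝ) ^ (i.1 + 1)) →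
            ∃ p ∈ G,
              ((p.2 : ℝ) < ∑ i, (p.1 i : ℝ) * z i ∧
                (∑ i, (p.1 i : ℝ) * z i) < (p.2 : ℝ) + 1)) := by
  have hgood : ∀ G ∈ F.powerset, ∀ᶠ θ : ℕ in atTop, G.card < k →
      ∃ v : Fin k → ℝ, (∀ p ∈ G, ∑ i, (p.1 (.inr i) : ℝ) * v i = 0) ∧
        ∑ i, (θ : ℝ) ^ (i.1 + 1) * v i ≠ 0 := by
    intro G _
    refine eventually_imp_distrib_left.2 fun hG => ?_
    obtain ⟨v, hv0, hv⟩ := Matrix.exists_mulVec_eq_zero_of_card_lt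
      (fun (p : G) i => (p.1.1 (.inr i) : ℝ)) (by simpa using hG)
    have hexp : Function.Injective fun i : Fin k => i.1 + 1 := fun i j h => by
      simpa [Fin.ext_iff] using h
    filter_upwards [tendsto_natCast_atTop_atTop.eventually
      (eventually_sum_pow_mul_ne_zero hexp hv0)] with θ hθ
    exact ⟨v, fun p hp => by simpa [mulVec, dotProduct] using congrFun hv ⟨p, hp⟩, hθ⟩
  obtain ⟨θ, hθ1, hθ⟩ := ((eventually_ge_atTop 1).and ((F.powerset.eventually_all).2 hgood)).exists
  refine ⟨θ, hθ1, fun G hGF hGk hcover => ?_⟩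
  obtain ⟨v, hv, hθv⟩ := hθ G (Finset.mem_powerset.2 hGF) hGk
  obtain ⟨z, hz01, hlo, hhi, hz⟩ := exists_notMem_splitSet_of_sum_mul_ne_zero _ G hv hθv
  obtain ⟨p, hp, hzp⟩ := hcover z hz01 hlo hhi
  exact hz p hp hzp

theorem stmt_8 (k : ℕ) (hk : 2 ≤ k)
    (F : Finset ((Fin k ⊕ Fin k → ℤ) × ℤ)) :
    ∃ θ : ℕ, 1 ≤ θ ∧
      ∀ G ⊆ F, G.card < k →
        ¬ (∀ z : Fin k ⊕ Fin k → ℝ, (∀ i, 0 ≤ z i ∧ z i ≤ 1) →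
            ((∑ i : Fin k, (θ : ℝ) ^ (i.1 + 1)) <
              ∑ i : Fin k, (θ : ℝ) ^ (i.1 + 1) * (z (Sum.inl i) + z (Sum.inr i))) →
            ((∑ i : Fin k, (θ : ℝ) ^ (i.1 + 1) * (z (Sum.inl i) + z (Sum.inr i))) <
              1 + ∑ i : Fin k, (θ : ℝ) ^ (i.1 + 1)) →
            ∃ p ∈ G,
              ((p.2 : ℝ) < ∑ i, (p.1 i : ℝ) * z i ∧
                (∑ i, (p.1 i : ℝ) * z i) < (p.2 : ℝ) + 1)) :=
  stmt_8_general k F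
end

section
/- Let k ≥ 1 and let F₁ be the family of the k split sets {x ∈ ℝᵏ : 0 < xᵢ < 1}, i = 1,…,k. Then dominating the split set T = {x ∈ ℝᵏ : k − 1 < Σᵢ xᵢ < k} requires all k split sets of F₁: the union of any k − 1 of them intersected with [0,1]ᵏ does not contain T ∩ [0,1]ᵏ, while the union of all k does. -/
open Finset

/-!
A point of the cube outside every split `0 < xᵢ < 1` is a `0/1`-vector, so its coordinate sum is
an integer and cannot lie strictly between `k - 1` and `k`. Conversely, for `j ∉ G`, the point with
`xⱼ = 1/2` and all other coordinates `1` has sum `k - 1/2` but meets none of the splits indexed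
by `G`.
-/

theorem sum_eq_card_filter_of_forall_eq_zero_or_one {ι : Type*} (s : Finset ι) {x : ι → ℝ}
    (hx : ∀ i, x i = 0 ∨ x i = 1) : ∑ i ∈ s, x i = #{i ∈ s | x i = 1} := by
  rw [← sum_boole]
  refine sum_congr rfl fun i _ => ?_
  rcases hx i with h | h <;> simp [h]

theorem natCast_notMem_Ioo_sub_one (m k : ℕ) : (m : ℝ) ∉ Set.Ioo ((k : ℝ) - 1) k := by
  rintro ⟨hlo, hhi⟩
  have hlt : m + 1 ≤ k := by exact_mod_cast hhi
  have hle : (m : ℝ) + 1 ≤ k := by exact_mod_cast hlt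
  linarith

theorem exists_mem_Ioo_of_sum_mem_Ioo {ι : Type*} [Fintype ι] {x : ι → ℝ}
    (hx : ∀ i, 0 ≤ x i ∧ x i ≤ 1) {k : ℕ} (hlo : (k : ℝ) - 1 < ∑ i, x i)
    (hhi : ∑ i, x i < k) : ∃ i, 0 < x i ∧ x i < 1 := by
  by_contra! hnone
  have h01 : ∀ i, x i = 0 ∨ x i = 1 := fun i =>
    (hx i).1.eq_or_lt.imp Eq.symm fun hpos => le_antisymm (hx i).2 (hnone i hpos)
  rw [sum_eq_card_filter_of_forall_eq_zero_or_one _ h01] at hlo hhi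
  exact natCast_notMem_Ioo_sub_one _ k ⟨hlo, hhi⟩

theorem sum_update_one {ι : Type*} [Fintype ι] [DecidableEq ι] (j : ι) (c : ℝ) :
    ∑ i, Function.update (1 : ι → ℝ) j c i = Fintype.card ι - 1 + c := by
  rw [sum_update_of_mem (mem_univ j)]
  simp only [Pi.one_apply, sum_const, card_sdiff, card_univ, inter_univ, card_singleton,
    nsmul_eq_mul, Nat.cast_pred (Fintype.card_pos_iff.2 ⟨j⟩), mul_one]
  ring

theorem stmt_12_general (k : ℕ) :
    (∀ G : Finset (Fin k), G.card < k →
      ¬ (∀ x : Fin k → ℝ, (∀ i, 0 ≤ x i ∧ x i ≤ 1) →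
          (k : ℝ) - 1 < ∑ i, x i → (∑ i, x i) < (k : ℝ) →
          ∃ i ∈ G, 0 < x i ∧ x i < 1)) ∧
    (∀ x : Fin k → ℝ, (∀ i, 0 ≤ x i ∧ x i ≤ 1) →
      (k : ℝ) - 1 < ∑ i, x i → (∑ i, x i) < (k : ℝ) →
      ∃ i, 0 < x i ∧ x i < 1) := by
  refine ⟨fun G hG hdom => ?_, fun x hx hlo hhi => exists_mem_Ioo_of_sum_mem_Ioo hx hlo hhi⟩
  obtain ⟨j, -, hj⟩ := exists_mem_notMem_of_card_lt_card (s := G) (t := univ) (by simpa using hG)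
  set x := Function.update (1 : Fin k → ℝ) j (1 / 2)
  have hsum : ∑ i, x i = k - 1 / 2 := by
    rw [sum_update_one, Fintype.card_fin]
    ring
  have hcube : ∀ i, 0 ≤ x i ∧ x i ≤ 1 := fun i => by
    simp only [x, Function.update_apply, Pi.one_apply]
    split_ifs <;> norm_num
  obtain ⟨i, hiG, -, hi1⟩ := hdom x hcube (by linarith) (by linarith)
  have hij : i ≠ j := ne_of_mem_of_not_mem hiG hj
  simp [x, hij] at hi1

theorem stmt_12 (k : ℕ) (hk : 1 ≤ k) :
    (∀ G : Finset (Fin k), G.card < k →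
      ¬ (∀ x : Fin k → ℝ, (∀ i, 0 ≤ x i ∧ x i ≤ 1) →
          (k : ℝ) - 1 < ∑ i, x i → (∑ i, x i) < (k : ℝ) →
          ∃ i ∈ G, 0 < x i ∧ x i < 1)) ∧
    (∀ x : Fin k → ℝ, (∀ i, 0 ≤ x i ∧ x i ≤ 1) →
      (k : ℝ) - 1 < ∑ i, x i → (∑ i, x i) < (k : ℝ) →
      ∃ i, 0 < x i ∧ x i < 1) :=
  stmt_12_general k
end

section
/- Let π ∈ ℤ³ with 0 ≤ π₁ ≤ π₂ ≤ π₃ and η ∈ ℤ with π₃ ≤ η and π₁ + π₂ ≥ η + 1. Then {x ∈ [0,1]³ : η < πᵀx < η + 1} ⊆ {x ∈ [0,1]³ : 1 < x₁ + x₂ + x₃ < 2}. -/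
/-!
Write `S = x₁ + x₂ + x₃`. If `S ≤ 1` then `πᵀx ≤ π₃ S ≤ π₃ ≤ η`, and if `S ≥ 2` then, the weights
being nonnegative and increasing, `πᵀx ≥ π₁ + π₂ ≥ η + 1`.
-/

section WeightedSum

variable {R : Type*} [CommRing R] [LinearOrder R] [IsStrictOrderedRing R]

theorem weighted_sum_le_mul_sum {a₁ a₂ a₃ c x₁ x₂ x₃ : R}
    (ha₁ : a₁ ≤ c) (ha₂ : a₂ ≤ c) (ha₃ : a₃ ≤ c)
    (hx₁ : 0 ≤ x₁) (hx₂ : 0 ≤ x₂) (hx₃ : 0 ≤ x₃) :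
    a₁ * x₁ + a₂ * x₂ + a₃ * x₃ ≤ c * (x₁ + x₂ + x₃) := by
  have := mul_le_mul_of_nonneg_right ha₁ hx₁
  have := mul_le_mul_of_nonneg_right ha₂ hx₂
  have := mul_le_mul_of_nonneg_right ha₃ hx₃
  linarith

theorem add_le_weighted_sum_of_two_le_sum {a₁ a₂ a₃ x₁ x₂ x₃ : R}
    (ha₁ : 0 ≤ a₁) (ha₁₂ : a₁ ≤ a₂) (ha₂₃ : a₂ ≤ a₃)
    (hx₁ : x₁ ≤ 1) (hx₃ : 0 ≤ x₃) (hsum : 2 ≤ x₁ + x₂ + x₃) :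
    a₁ + a₂ ≤ a₁ * x₁ + a₂ * x₂ + a₃ * x₃ := by
  have h₃ : a₂ * x₃ ≤ a₃ * x₃ := mul_le_mul_of_nonneg_right ha₂₃ hx₃
  have h₂ : a₂ * (1 - x₁) ≤ a₂ * (x₂ + x₃ - 1) :=
    mul_le_mul_of_nonneg_left (by linarith) (ha₁.trans ha₁₂)
  have h₁ : a₁ * (1 - x₁) ≤ a₂ * (1 - x₁) :=
    mul_le_mul_of_nonneg_right ha₁₂ (sub_nonneg.mpr hx₁)
  linear_combination h₁ + h₂ + h₃

end WeightedSum

theorem stmt_13 (π₁ π₂ π₃ η : ℤ) (h0 : 0 ≤ π₁) (h12 : π₁ ≤ π₂) (h23 : π₂ ≤ π₃)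
    (h3 : π₃ ≤ η) (h12η : η + 1 ≤ π₁ + π₂) :
    ∀ x₁ x₂ x₃ : ℝ, 0 ≤ x₁ → x₁ ≤ 1 → 0 ≤ x₂ → x₂ ≤ 1 → 0 ≤ x₃ → x₃ ≤ 1 →
      (η : ℝ) < π₁ * x₁ + π₂ * x₂ + π₃ * x₃ →
      π₁ * x₁ + π₂ * x₂ + π₃ * x₃ < (η : ℝ) + 1 →
      1 < x₁ + x₂ + x₃ ∧ x₁ + x₂ + x₃ < 2 := by
  intro x₁ x₂ x₃ hx₁ hx₁' hx₂ _ hx₃ _ hlo hhi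
  have h0 : (0 : ℝ) ≤ π₁ := by exact_mod_cast h0
  have h12 : (π₁ : ℝ) ≤ π₂ := by exact_mod_cast h12
  have h23 : (π₂ : ℝ) ≤ π₃ := by exact_mod_cast h23
  have h3 : (π₃ : ℝ) ≤ η := by exact_mod_cast h3
  have h12η : (η : ℝ) + 1 ≤ π₁ + π₂ := by exact_mod_cast h12η
  constructor
  · by_contra! hsum
    have hle := weighted_sum_le_mul_sum (h12.trans h23) h23 le_rfl hx₁ hx₂ hx₃
    have : (π₃ : ℝ) * (x₁ + x₂ + x₃) ≤ π₃ :=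
      mul_le_of_le_one_right (h0.trans (h12.trans h23)) hsum
    linarith
  · by_contra! hsum
    linarith [add_le_weighted_sum_of_two_le_sum h0 h12 h23 hx₁' hx₃ hsum]
end

section
/- Let π ∈ ℤ⁴ with 0 ≤ π₁ ≤ π₂ ≤ π₃ ≤ π₄ and η ∈ ℤ with π₃ + π₄ ≤ η and π₁ + π₂ + π₃ ≥ η + 1. Then {x ∈ [0,1]⁴ : η < πᵀx < η + 1} ⊆ {x ∈ [0,1]⁴ : 2 < x₁ + x₂ + x₃ + x₄ < 3}. -/
/-!
Write `s = x₁ + x₂ + x₃ + x₄`. If `s ≤ 2`, replacing the three smallest weights by `π₃` gives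
`πᵀx ≤ π₃ (s - x₄) + π₄ x₄ ≤ π₃ + π₄ ≤ η`. If `s ≥ 3`, the deficits `1 - xᵢ` sum to at most `1`
and are each weighted by at most `π₄`, so `πᵀx ≥ π₁ + π₂ + π₃ - π₄ (3 - s) ≥ η + 1`.
Either way `πᵀx` misses the open interval `(η, η + 1)`.
-/

section SortedWeights

variable {K : Type*} [Field K] [LinearOrder K] [IsStrictOrderedRing K]

theorem weighted_sum_le_of_sum_le_two {a b c d x₁ x₂ x₃ x₄ : K}
    (hac : a ≤ c) (hbc : b ≤ c) (hcd : c ≤ d) (hc : 0 ≤ c)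
    (hx₁ : 0 ≤ x₁) (hx₂ : 0 ≤ x₂) (hx₄ : x₄ ≤ 1) (hs : x₁ + x₂ + x₃ + x₄ ≤ 2) :
    a * x₁ + b * x₂ + c * x₃ + d * x₄ ≤ c + d :=
  calc a * x₁ + b * x₂ + c * x₃ + d * x₄
      ≤ c * x₁ + c * x₂ + c * x₃ + d * x₄ := by
        gcongr
    _ = c * (x₁ + x₂ + x₃ + x₄) + (d - c) * x₄ := by ring
    _ ≤ c * 2 + (d - c) * 1 := by gcongr
    _ = c + d := by ring

theorem sum_le_weighted_sum_of_three_le_sum {a b c d x₁ x₂ x₃ x₄ : K}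
    (had : a ≤ d) (hbd : b ≤ d) (hcd : c ≤ d) (hd : 0 ≤ d)
    (hx₁ : x₁ ≤ 1) (hx₂ : x₂ ≤ 1) (hx₃ : x₃ ≤ 1) (hs : 3 ≤ x₁ + x₂ + x₃ + x₄) :
    a + b + c ≤ a * x₁ + b * x₂ + c * x₃ + d * x₄ := by
  have deficit : a * (1 - x₁) + b * (1 - x₂) + c * (1 - x₃)
      ≤ d * (1 - x₁) + d * (1 - x₂) + d * (1 - x₃) := by
    gcongr
  have : d * (3 - (x₁ + x₂ + x₃ + x₄)) ≤ 0 := mul_nonpos_of_nonneg_of_nonpos hd (by linarith)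
  linarith

end SortedWeights

theorem stmt_16_general (π₁ π₂ π₃ π₄ η : ℤ) (h12 : π₁ ≤ π₂) (h23 : π₂ ≤ π₃)
    (h34 : π₃ ≤ π₄) (h34η : π₃ + π₄ ≤ η) (h123 : η + 1 ≤ π₁ + π₂ + π₃) :
    ∀ x₁ x₂ x₃ x₄ : ℝ, 0 ≤ x₁ → x₁ ≤ 1 → 0 ≤ x₂ → x₂ ≤ 1 → 0 ≤ x₃ → x₃ ≤ 1 →
      0 ≤ x₄ → x₄ ≤ 1 →
      (η : ℝ) < π₁ * x₁ + π₂ * x₂ + π₃ * x₃ + π₄ * x₄ →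
      π₁ * x₁ + π₂ * x₂ + π₃ * x₃ + π₄ * x₄ < (η : ℝ) + 1 →
      2 < x₁ + x₂ + x₃ + x₄ ∧ x₁ + x₂ + x₃ + x₄ < 3 := by
  intro x₁ x₂ x₃ x₄ hx₁ hx₁' hx₂ hx₂' _ hx₃' _ hx₄' hlo hhi
  have H12 : (π₁ : ℝ) ≤ π₂ := mod_cast h12
  have H23 : (π₂ : ℝ) ≤ π₃ := mod_cast h23
  have H34 : (π₃ : ℝ) ≤ π₄ := mod_cast h34
  have H34η : (π₃ : ℝ) + π₄ ≤ η := mod_cast h34η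
  have H123 : (η : ℝ) + 1 ≤ π₁ + π₂ + π₃ := mod_cast h123
  have hπ₃ : (0 : ℝ) ≤ π₃ := by linarith
  constructor
  · by_contra! hs
    have := weighted_sum_le_of_sum_le_two (H12.trans H23) H23 H34 hπ₃ hx₁ hx₂ hx₄' hs
    linarith
  · by_contra! hs
    have := sum_le_weighted_sum_of_three_le_sum (H12.trans (H23.trans H34)) (H23.trans H34)
      H34 (hπ₃.trans H34) hx₁' hx₂' hx₃' hs
    linarith

theorem stmt_16 (π₁ π₂ π₃ π₄ η : ℤ) (h0 : 0 ≤ π₁) (h12 : π₁ ≤ π₂) (h23 : π₂ ≤ π₃)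
    (h34 : π₃ ≤ π₄) (h34η : π₃ + π₄ ≤ η) (h123 : η + 1 ≤ π₁ + π₂ + π₃) :
    ∀ x₁ x₂ x₃ x₄ : ℝ, 0 ≤ x₁ → x₁ ≤ 1 → 0 ≤ x₂ → x₂ ≤ 1 → 0 ≤ x₃ → x₃ ≤ 1 →
      0 ≤ x₄ → x₄ ≤ 1 →
      (η : ℝ) < π₁ * x₁ + π₂ * x₂ + π₃ * x₃ + π₄ * x₄ →
      π₁ * x₁ + π₂ * x₂ + π₃ * x₃ + π₄ * x₄ < (η : ℝ) + 1 →
      2 < x₁ + x₂ + x₃ + x₄ ∧ x₁ + x₂ + x₃ + x₄ < 3 :=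
  stmt_16_general π₁ π₂ π₃ π₄ η h12 h23 h34 h34η h123
end

section
/- Let π ∈ ℤ⁴ with 0 ≤ π₁ ≤ π₂ ≤ π₃ ≤ π₄ and η ∈ ℤ satisfy π₂ + π₄ ≤ η, π₁ + π₂ + π₃ ≥ η + 1, and π₃ + π₄ ≥ η + 1. Then {x ∈ [0,1]⁴ : η < πᵀx < η + 1} is contained in the union of {x ∈ [0,1]⁴ : 2 < x₁ + x₂ + x₃ + x₄ < 3} and {x ∈ [0,1]⁴ : 1 < x₃ + x₄ < 2}. -/
/-!
Write `s = x₁ + x₂ + x₃ + x₄` and `t = x₃ + x₄`. A point of the cube outside both slabs has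
`t ≤ 1` or `t = 2`, and `s ≤ 2` or `s ≥ 3`. If `t = 2` then `x₃ = x₄ = 1` and `πᵀx ≥ π₃ + π₄`.
If `t ≤ 1` and `s ≥ 3` then `x₁ = x₂ = 1`, `t = 1` and `πᵀx ≥ π₁ + π₂ + π₃`. If `t ≤ 1` and
`s ≤ 2`, moving weight towards the larger coefficients gives `πᵀx ≤ π₂ s + (π₄ - π₂) t ≤ π₂ + π₄`.
In each case `πᵀx` misses the open interval `(η, η + 1)`.
-/

section

variable {K : Type*} [Field K] [LinearOrder K] [IsStrictOrderedRing K] {a₁ a₂ a₃ a₄ x₁ x₂ x₃ x₄ : K}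

lemma weighted_sum_le_of_sum_le_two_s18 (ha₂ : 0 ≤ a₂) (ha₁₂ : a₁ ≤ a₂) (ha₂₄ : a₂ ≤ a₄)
    (ha₃₄ : a₃ ≤ a₄) (hx₁ : 0 ≤ x₁) (hx₃ : 0 ≤ x₃) (ht : x₃ + x₄ ≤ 1)
    (hs : x₁ + x₂ + x₃ + x₄ ≤ 2) :
    a₁ * x₁ + a₂ * x₂ + a₃ * x₃ + a₄ * x₄ ≤ a₂ + a₄ := by
  have ha₄₂ : 0 ≤ a₄ - a₂ := sub_nonneg.2 ha₂₄
  calc a₁ * x₁ + a₂ * x₂ + a₃ * x₃ + a₄ * x₄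
      ≤ a₂ * (x₁ + x₂ + x₃ + x₄) + (a₄ - a₂) * (x₃ + x₄) := by
        linarith [mul_le_mul_of_nonneg_right ha₁₂ hx₁, mul_le_mul_of_nonneg_right ha₃₄ hx₃]
    _ ≤ a₂ * 2 + (a₄ - a₂) * 1 := by gcongr
    _ = a₂ + a₄ := by ring

lemma add_add_le_weighted_sum_of_three_le_sum (ha₃₄ : a₃ ≤ a₄) (hx₁ : x₁ ≤ 1) (hx₂ : x₂ ≤ 1)
    (hx₄ : 0 ≤ x₄) (ht : x₃ + x₄ ≤ 1) (hs : 3 ≤ x₁ + x₂ + x₃ + x₄) :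
    a₁ + a₂ + a₃ ≤ a₁ * x₁ + a₂ * x₂ + a₃ * x₃ + a₄ * x₄ := by
  obtain rfl : x₁ = 1 := by linarith
  obtain rfl : x₂ = 1 := by linarith
  obtain rfl : x₃ = 1 - x₄ := by linarith
  linarith [mul_le_mul_of_nonneg_right ha₃₄ hx₄]

lemma add_le_weighted_sum_of_two_le_add (ha₁ : 0 ≤ a₁) (ha₂ : 0 ≤ a₂) (hx₁ : 0 ≤ x₁)
    (hx₂ : 0 ≤ x₂) (hx₃ : x₃ ≤ 1) (hx₄ : x₄ ≤ 1) (ht : 2 ≤ x₃ + x₄) :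
    a₃ + a₄ ≤ a₁ * x₁ + a₂ * x₂ + a₃ * x₃ + a₄ * x₄ := by
  obtain rfl : x₃ = 1 := by linarith
  obtain rfl : x₄ = 1 := by linarith
  linarith [mul_nonneg ha₁ hx₁, mul_nonneg ha₂ hx₂]

lemma weighted_sum_le_or_ge_of_not_mem_slabs (ha₁ : 0 ≤ a₁) (ha₁₂ : a₁ ≤ a₂) (ha₂₃ : a₂ ≤ a₃)
    (ha₃₄ : a₃ ≤ a₄) (hx₁ : 0 ≤ x₁) (hx₁' : x₁ ≤ 1) (hx₂ : 0 ≤ x₂) (hx₂' : x₂ ≤ 1)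
    (hx₃ : 0 ≤ x₃) (hx₃' : x₃ ≤ 1) (hx₄ : 0 ≤ x₄) (hx₄' : x₄ ≤ 1)
    (hs : ¬(2 < x₁ + x₂ + x₃ + x₄ ∧ x₁ + x₂ + x₃ + x₄ < 3)) (ht : ¬(1 < x₃ + x₄ ∧ x₃ + x₄ < 2)) :
    a₁ * x₁ + a₂ * x₂ + a₃ * x₃ + a₄ * x₄ ≤ a₂ + a₄ ∨
      a₁ + a₂ + a₃ ≤ a₁ * x₁ + a₂ * x₂ + a₃ * x₃ + a₄ * x₄ ∨
      a₃ + a₄ ≤ a₁ * x₁ + a₂ * x₂ + a₃ * x₃ + a₄ * x₄ := by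
  have ha₂ : 0 ≤ a₂ := ha₁.trans ha₁₂
  rcases le_or_gt (x₃ + x₄) 1 with ht₁ | ht₁
  · rcases le_or_gt (x₁ + x₂ + x₃ + x₄) 2 with hs₂ | hs₂
    · exact .inl <| weighted_sum_le_of_sum_le_two_s18 ha₂ ha₁₂ (ha₂₃.trans ha₃₄) ha₃₄ hx₁ hx₃ ht₁ hs₂
    · exact .inr <| .inl <|
        add_add_le_weighted_sum_of_three_le_sum ha₃₄ hx₁' hx₂' hx₄ ht₁ (le_of_not_gt (hs ⟨hs₂, ·⟩))
  · exact .inr <| .inr <|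
      add_le_weighted_sum_of_two_le_add ha₁ ha₂ hx₁ hx₂ hx₃' hx₄' (le_of_not_gt (ht ⟨ht₁, ·⟩))

end

theorem stmt_18 (π₁ π₂ π₃ π₄ η : ℤ) (h0 : 0 ≤ π₁) (h12 : π₁ ≤ π₂) (h23 : π₂ ≤ π₃)
    (h34 : π₃ ≤ π₄) (h24 : π₂ + π₄ ≤ η) (h123 : η + 1 ≤ π₁ + π₂ + π₃)
    (h34η : η + 1 ≤ π₃ + π₄) :
    ∀ x₁ x₂ x₃ x₄ : ℝ, 0 ≤ x₁ → x₁ ≤ 1 → 0 ≤ x₂ → x₂ ≤ 1 → 0 ≤ x₃ → x₃ ≤ 1 →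
      0 ≤ x₄ → x₄ ≤ 1 →
      (η : ℝ) < π₁ * x₁ + π₂ * x₂ + π₃ * x₃ + π₄ * x₄ →
      π₁ * x₁ + π₂ * x₂ + π₃ * x₃ + π₄ * x₄ < (η : ℝ) + 1 →
      ((2 < x₁ + x₂ + x₃ + x₄ ∧ x₁ + x₂ + x₃ + x₄ < 3) ∨
        (1 < x₃ + x₄ ∧ x₃ + x₄ < 2)) := by
  intro x₁ x₂ x₃ x₄ hx₁ hx₁' hx₂ hx₂' hx₃ hx₃' hx₄ hx₄' hlo hhi
  by_contra hout
  obtain ⟨hs, ht⟩ := not_or.mp hout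
  have h24' : (π₂ + π₄ : ℝ) ≤ η := by exact_mod_cast h24
  have h123' : (η + 1 : ℝ) ≤ π₁ + π₂ + π₃ := by exact_mod_cast h123
  have h34η' : (η + 1 : ℝ) ≤ π₃ + π₄ := by exact_mod_cast h34η
  rcases weighted_sum_le_or_ge_of_not_mem_slabs (Int.cast_nonneg h0) (Int.cast_le.2 h12)
      (Int.cast_le.2 h23) (Int.cast_le.2 h34) hx₁ hx₁' hx₂ hx₂' hx₃ hx₃' hx₄ hx₄' hs ht
    with h | h | h <;> linarith
end
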